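/- Let n be a natural number and consider the set Fin (2n) of 2n points arranged in linear order. A perfect matching of Fin (2n) is a partition of Fin (2n) into two-element blocks, and such a matching is called non-crossing if there are no indices a < b < c < d such that {a, c} and {b, d} are both blocks of the matching. Then the number of non-crossing perfect matchings of Fin (2n) equals the n-th Catalan number. (This is the count of Kauffman diagrams: the number of planar (m,n)-diagrams with no inner boxes and no loops equals the (m+n)/2-th Catalan number when m+n is even, and is 0 when m+n is odd, since an odd set admits no perfect matching.) -/

import Mathlib

open Finset

/-- A perfect matching of `Fin (2*n)`: a family of blocks, each of cardinality two,
such that every point belongs to exactly one block. -/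
def IsPerfectMatching (n : ℕ) (M : Finset (Finset (Fin (2 * n)))) : Prop :=
  (∀ B ∈ M, B.card = 2) ∧ ∀ x : Fin (2 * n), ∃! B, B ∈ M ∧ x ∈ B

/-- A matching is non-crossing if there are no indices `a < b < c < d` with
`{a, c}` and `{b, d}` both blocks of the matching. -/
def IsNonCrossing (n : ℕ) (M : Finset (Finset (Fin (2 * n)))) : Prop :=
  ¬ ∃ a b c d : Fin (2 * n), a < b ∧ b < c ∧ c < d ∧
    ({a, c} : Finset (Fin (2 * n))) ∈ M ∧ ({b, d} : Finset (Fin (2 * n))) ∈ M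

/-!
Pair the least point `a` with its partner `b`. Non-crossing forces every other block to lie
either strictly between `a` and `b` or entirely beyond `b`, so a non-crossing perfect matching
of a finite linear order is the block `{a, b}` together with independent non-crossing perfect
matchings of the two sides. By induction, the number of such matchings of an `N`-element set is
`catalan (N / 2)` for even `N` and `0` for odd `N`: both satisfy the recurrence
`c (m + 2) = ∑ i + j = m, c i * c j`, in which only pairs of even sizes contribute.
-/

def catalanHalf (N : ℕ) : ℕ := if Even N then catalan (N / 2) else 0

theorem catalanHalf_two_mul (n : ℕ) : catalanHalf (2 * n) = catalan n := by
  simp [catalanHalf]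

theorem catalanHalf_of_odd {N : ℕ} (h : Odd N) : catalanHalf N = 0 :=
  if_neg (Nat.not_even_iff_odd.2 h)

theorem catalanHalf_add_two (m : ℕ) :
    catalanHalf (m + 2) = ∑ p ∈ antidiagonal m, catalanHalf p.1 * catalanHalf p.2 := by
  rcases Nat.even_or_odd' m with ⟨k, rfl | rfl⟩
  · rw [show 2 * k + 2 = 2 * (k + 1) by ring, catalanHalf_two_mul, catalan_succ']
    -- only pairs of even numbers contribute on the right
    refine sum_bij_ne_zero (fun p _ _ => (2 * p.1, 2 * p.2)) (fun p hp _ => ?_)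
      (fun p _ _ q _ _ h => ?_) (fun q hq hne => ?_) (fun p _ _ => ?_)
    · rw [HasAntidiagonal.mem_antidiagonal] at hp ⊢
      omega
    · simp only [Prod.mk.injEq] at h
      exact Prod.ext (by omega) (by omega)
    · obtain ⟨i, hi⟩ : Even q.1 := Nat.not_odd_iff_even.1 fun h => hne (by
        rw [catalanHalf_of_odd h, zero_mul])
      obtain ⟨j, hj⟩ : Even q.2 := Nat.not_odd_iff_even.1 fun h => hne (by
        rw [catalanHalf_of_odd h, mul_zero])
      have hq' := HasAntidiagonal.mem_antidiagonal.1 hq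
      refine ⟨(i, j), HasAntidiagonal.mem_antidiagonal.2 (by omega), ?_,
        Prod.ext (by simp only; omega) (by simp only; omega)⟩
      rwa [hi, hj, ← two_mul, ← two_mul, catalanHalf_two_mul, catalanHalf_two_mul] at hne
    · simp only [catalanHalf_two_mul]
  · rw [catalanHalf_of_odd ⟨k + 1, by ring⟩]
    refine (sum_eq_zero fun p hp => ?_).symm
    rcases Nat.even_or_odd p.1 with h | h
    · obtain ⟨i, hi⟩ := h
      rw [HasAntidiagonal.mem_antidiagonal] at hp
      rw [catalanHalf_of_odd (N := p.2) ⟨k - i, by omega⟩, mul_zero]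
    · rw [catalanHalf_of_odd h, zero_mul]

variable {α : Type*}

structure IsPerfectMatchingOn (s : Finset α) (M : Finset (Finset α)) : Prop where
  card_eq_two : ∀ B ∈ M, #B = 2
  subset : ∀ B ∈ M, B ⊆ s
  exists_mem : ∀ x ∈ s, ∃ B ∈ M, x ∈ B
  eq_of_mem : ∀ B ∈ M, ∀ B' ∈ M, ∀ x ∈ B, x ∈ B' → B = B'

namespace IsPerfectMatchingOn

variable {s u : Finset α} {M N : Finset (Finset α)}

theorem nonempty (h : IsPerfectMatchingOn s M) {B : Finset α} (hB : B ∈ M) : B.Nonempty :=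
  card_pos.1 (by rw [h.card_eq_two B hB]; norm_num)

theorem eq_empty (h : IsPerfectMatchingOn ∅ M) : M = ∅ :=
  eq_empty_of_forall_notMem fun B hB =>
    (h.nonempty hB).ne_empty (subset_empty.1 (h.subset B hB))

theorem pair [DecidableEq α] {a b : α} (hab : a ≠ b) :
    IsPerfectMatchingOn {a, b} {{a, b}} where
  card_eq_two B hB := by rw [mem_singleton.1 hB, card_pair hab]
  subset B hB := (mem_singleton.1 hB).le
  exists_mem x hx := ⟨{a, b}, mem_singleton_self _, hx⟩
  eq_of_mem B hB B' hB' _ _ _ := (mem_singleton.1 hB).trans (mem_singleton.1 hB').symm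

theorem exists_pair_mem [DecidableEq α] {a : α} {t : Finset α}
    (h : IsPerfectMatchingOn (insert a t) M) : ∃ b ∈ t, {a, b} ∈ M := by
  obtain ⟨B, hB, haB⟩ := h.exists_mem a (mem_insert_self a t)
  obtain ⟨b, hb⟩ := card_eq_one.1 (by rw [card_erase_of_mem haB, h.card_eq_two B hB])
  have hbB : b ∈ B.erase a := hb ▸ mem_singleton_self b
  refine ⟨b, (mem_insert.1 (h.subset B hB (mem_of_mem_erase hbB))).resolve_left
    (ne_of_mem_erase hbB), ?_⟩
  rwa [← hb, insert_erase haB]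

theorem union [DecidableEq α] (h : IsPerfectMatchingOn s M) (h' : IsPerfectMatchingOn u N)
    (hsu : Disjoint s u) : IsPerfectMatchingOn (s ∪ u) (M ∪ N) where
  card_eq_two B hB := (mem_union.1 hB).elim (h.card_eq_two B) (h'.card_eq_two B)
  subset B hB := (mem_union.1 hB).elim (fun hB => (h.subset B hB).trans subset_union_left)
    (fun hB => (h'.subset B hB).trans subset_union_right)
  exists_mem x hx := (mem_union.1 hx).elim
    (fun hx => (h.exists_mem x hx).imp fun _ ⟨hB, hxB⟩ => ⟨mem_union_left _ hB, hxB⟩)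
    (fun hx => (h'.exists_mem x hx).imp fun _ ⟨hB, hxB⟩ => ⟨mem_union_right _ hB, hxB⟩)
  eq_of_mem B hB B' hB' x hxB hxB' := by
    rcases mem_union.1 hB with hB | hB <;> rcases mem_union.1 hB' with hB' | hB'
    · exact h.eq_of_mem B hB B' hB' x hxB hxB'
    · exact (disjoint_left.1 hsu (h.subset B hB hxB) (h'.subset B' hB' hxB')).elim
    · exact (disjoint_left.1 hsu (h.subset B' hB' hxB') (h'.subset B hB hxB)).elim
    · exact h'.eq_of_mem B hB B' hB' x hxB hxB'

theorem restrict [DecidableEq α] (h : IsPerfectMatchingOn s M) (hus : u ⊆ s)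
    (hM : ∀ B ∈ M, ∀ x ∈ B, x ∈ u → B ⊆ u) : IsPerfectMatchingOn u (M.filter (· ⊆ u)) where
  card_eq_two B hB := h.card_eq_two B (mem_filter.1 hB).1
  subset B hB := (mem_filter.1 hB).2
  exists_mem x hx := by
    obtain ⟨B, hB, hxB⟩ := h.exists_mem x (hus hx)
    exact ⟨B, mem_filter.2 ⟨hB, hM B hB x hxB hx⟩, hxB⟩
  eq_of_mem B hB B' hB' := h.eq_of_mem B (mem_filter.1 hB).1 B' (mem_filter.1 hB').1

theorem filter_union_eq_left [DecidableEq α] (h : IsPerfectMatchingOn s M)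
    (h' : IsPerfectMatchingOn u N) (hsu : Disjoint s u) : (M ∪ N).filter (· ⊆ s) = M := by
  rw [filter_union, filter_true_of_mem h.subset, filter_false_of_mem, union_empty]
  intro B hB hBs
  obtain ⟨x, hx⟩ := h'.nonempty hB
  exact disjoint_left.1 hsu (hBs hx) (h'.subset B hB hx)

theorem union_injective [DecidableEq α] {M' N' : Finset (Finset α)}
    (hM : IsPerfectMatchingOn s M) (hM' : IsPerfectMatchingOn s M')
    (hN : IsPerfectMatchingOn u N) (hN' : IsPerfectMatchingOn u N') (hsu : Disjoint s u)
    (heq : M ∪ N = M' ∪ N') : M = M' ∧ N = N' := by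
  refine ⟨?_, ?_⟩
  · rw [← hM.filter_union_eq_left hN hsu, heq, hM'.filter_union_eq_left hN' hsu]
  · rw [union_comm M, union_comm M'] at heq
    rw [← hN.filter_union_eq_left hM hsu.symm, heq, hN'.filter_union_eq_left hM' hsu.symm]

end IsPerfectMatchingOn

section LinearOrder

variable [LinearOrder α]

def IsNonCrossingFamily (M : Finset (Finset α)) : Prop :=
  ¬ ∃ a b c d : α, a < b ∧ b < c ∧ c < d ∧ ({a, c} : Finset α) ∈ M ∧ ({b, d} : Finset α) ∈ M

namespace IsNonCrossingFamily

variable {M N : Finset (Finset α)}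

theorem mono (hN : IsNonCrossingFamily N) (hMN : M ⊆ N) : IsNonCrossingFamily M :=
  fun ⟨a, b, c, d, hab, hbc, hcd, hac, hbd⟩ => hN ⟨a, b, c, d, hab, hbc, hcd, hMN hac, hMN hbd⟩

theorem union_of_lt (hM : IsNonCrossingFamily M) (hN : IsNonCrossingFamily N)
    (hlt : ∀ B ∈ M, ∀ B' ∈ N, ∀ x ∈ B, ∀ y ∈ B', x < y) : IsNonCrossingFamily (M ∪ N) := by
  rintro ⟨a, b, c, d, hab, hbc, hcd, hac, hbd⟩
  rcases mem_union.1 hac with hac | hac <;> rcases mem_union.1 hbd with hbd | hbd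
  · exact hM ⟨a, b, c, d, hab, hbc, hcd, hac, hbd⟩
  · exact (hlt _ hac _ hbd c (by simp) b (by simp)).not_gt hbc
  · exact (hlt _ hbd _ hac b (by simp) a (by simp)).not_gt hab
  · exact hN ⟨a, b, c, d, hab, hbc, hcd, hac, hbd⟩

theorem insert_of_nested (hM : IsNonCrossingFamily M) {a b : α} (hab : a < b)
    (hin : ∀ B ∈ M, ∀ x ∈ B, a < x ∧ x < b) : IsNonCrossingFamily (insert {a, b} M) := by
  have hle : ∀ B ∈ insert {a, b} M, ∀ x ∈ B, a ≤ x ∧ x ≤ b := by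
    intro B hB x hx
    rcases mem_insert.1 hB with rfl | hB
    · rcases (by simpa using hx : x = a ∨ x = b) with rfl | rfl
      exacts [⟨le_rfl, hab.le⟩, ⟨hab.le, le_rfl⟩]
    · exact ⟨(hin B hB x hx).1.le, (hin B hB x hx).2.le⟩
  have hmem : ∀ {x y z : α}, {x, y} ∈ insert {a, b} M → z ∈ ({x, y} : Finset α) →
      a < z → z < b → {x, y} ∈ M := by
    intro x y z hxy hz haz hzb
    refine (mem_insert.1 hxy).resolve_left fun h => ?_
    rcases (by simpa [h] using hz : z = a ∨ z = b) with rfl | rfl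
    exacts [haz.false, hzb.false]
  rintro ⟨p, q, r, t, hpq, hqr, hrt, hpr, hqt⟩
  have hap : a ≤ p := (hle _ hpr p (by simp)).1
  have htb : t ≤ b := (hle _ hqt t (by simp)).2
  -- the middle points `q` and `r` lie strictly inside `(a, b)`, so neither block is `{a, b}`
  exact hM ⟨p, q, r, t, hpq, hqr, hrt,
    hmem hpr (by simp) (hap.trans_lt (hpq.trans hqr)) (hrt.trans_le htb),
    hmem hqt (by simp) (hap.trans_lt hpq) (hqr.trans (hrt.trans_le htb))⟩

end IsNonCrossingFamily

theorem exists_lt_and_eq_pair_of_card_eq_two {B : Finset α} (hB : #B = 2) :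
    ∃ u v, u < v ∧ B = {u, v} := by
  obtain ⟨u, v, huv, rfl⟩ := card_eq_two.1 hB
  rcases huv.lt_or_gt with h | h
  exacts [⟨u, v, h, rfl⟩, ⟨v, u, h, pair_comm u v⟩]

def nonCrossingMatchings (s : Finset α) : Set (Finset (Finset α)) :=
  {M | IsPerfectMatchingOn s M ∧ IsNonCrossingFamily M}

theorem finite_nonCrossingMatchings (s : Finset α) : (nonCrossingMatchings s).Finite :=
  (s.powerset.powerset : Set (Finset (Finset α))).toFinite.subset fun _ hM =>
    mem_powerset.2 fun B hB => mem_powerset.2 (hM.1.subset B hB)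

instance (s : Finset α) : Finite (nonCrossingMatchings s) :=
  (finite_nonCrossingMatchings s).to_subtype

theorem nonCrossingMatchings_empty : nonCrossingMatchings (∅ : Finset α) = {∅} := by
  ext M
  refine ⟨fun hM => hM.1.eq_empty, ?_⟩
  rintro rfl
  refine ⟨⟨?_, ?_, ?_, ?_⟩, ?_⟩ <;> simp [IsNonCrossingFamily]

section Split

variable {a : α} {t : Finset α}

theorem insert_eq_pair_union_filter {b : α} (hb : b ∈ t) :
    insert a t = {a, b} ∪ t.filter (· < b) ∪ t.filter (b < ·) := by
  ext x
  simp only [mem_insert, mem_union, mem_singleton, mem_filter]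
  grind

theorem disjoint_pair_filter_lt (hat : a ∉ t) (b : α) :
    Disjoint ({a, b} : Finset α) (t.filter (· < b)) := by
  simp only [disjoint_left, mem_insert, mem_singleton, mem_filter]
  rintro x (rfl | rfl) ⟨hx, hxb⟩
  exacts [hat hx, hxb.false]

theorem le_of_mem_pair_union_filter_lt {b x : α} (hab : a ≤ b)
    (hx : x ∈ {a, b} ∪ t.filter (· < b)) : x ≤ b := by
  simp only [mem_union, mem_insert, mem_singleton, mem_filter] at hx
  rcases hx with (rfl | rfl) | ⟨-, hx⟩
  exacts [hab, le_rfl, hx.le]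

theorem disjoint_pair_union_filter_lt_filter_gt {b : α} (hab : a ≤ b) :
    Disjoint ({a, b} ∪ t.filter (· < b)) (t.filter (b < ·)) :=
  disjoint_left.2 fun _ hx hx' =>
    (le_of_mem_pair_union_filter_lt hab hx).not_gt (mem_filter.1 hx').2

theorem pair_union_union_mem_nonCrossingMatchings (ha : ∀ x ∈ t, a < x) {b : α}
    (hb : b ∈ t) {M₁ M₂ : Finset (Finset α)} (h₁ : M₁ ∈ nonCrossingMatchings (t.filter (· < b)))
    (h₂ : M₂ ∈ nonCrossingMatchings (t.filter (b < ·))) :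
    {{a, b}} ∪ M₁ ∪ M₂ ∈ nonCrossingMatchings (insert a t) := by
  have hab : a < b := ha b hb
  have hdisj := disjoint_pair_union_filter_lt_filter_gt (t := t) hab.le
  have hpair₁ := (IsPerfectMatchingOn.pair hab.ne).union h₁.1
    (disjoint_pair_filter_lt (fun h => (ha a h).false) b)
  refine ⟨insert_eq_pair_union_filter hb ▸ hpair₁.union h₂.1 hdisj, ?_⟩
  refine (insert_eq {a, b} M₁ ▸ h₁.2.insert_of_nested hab fun B hB x hx => ?_).union_of_lt
    h₂.2 fun B hB B' hB' x hx y hy => ?_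
  · exact ⟨ha x (mem_filter.1 (h₁.1.subset B hB hx)).1, (mem_filter.1 (h₁.1.subset B hB hx)).2⟩
  · exact (le_of_mem_pair_union_filter_lt hab.le (hpair₁.subset B hB hx)).trans_lt
      (mem_filter.1 (h₂.1.subset B' hB' hy)).2

theorem pair_union_union_injective (ha : ∀ x ∈ t, a < x) {b b' : α} (hb : b ∈ t)
    (hb' : b' ∈ t) {M₁ M₂ M₁' M₂' : Finset (Finset α)}
    (h₁ : M₁ ∈ nonCrossingMatchings (t.filter (· < b)))
    (h₂ : M₂ ∈ nonCrossingMatchings (t.filter (b < ·)))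
    (h₁' : M₁' ∈ nonCrossingMatchings (t.filter (· < b')))
    (h₂' : M₂' ∈ nonCrossingMatchings (t.filter (b' < ·)))
    (heq : {{a, b}} ∪ M₁ ∪ M₂ = {{a, b'}} ∪ M₁' ∪ M₂') : b = b' ∧ M₁ = M₁' ∧ M₂ = M₂' := by
  have hat : a ∉ t := fun h => (ha a h).false
  have hab : a < b := ha b hb
  obtain rfl : b = b' := by
    have hpairs : ({a, b} : Finset α) = {a, b'} :=
      (pair_union_union_mem_nonCrossingMatchings ha hb' h₁' h₂').1.eq_of_mem _
        (heq ▸ by simp) _ (by simp) a (by simp) (by simp)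
    have hbmem : b ∈ ({a, b'} : Finset α) := hpairs ▸ by simp
    exact mem_singleton.1 ((mem_insert.1 hbmem).resolve_left hab.ne')
  have hpair := IsPerfectMatchingOn.pair hab.ne
  obtain ⟨heq₁, rfl⟩ := (hpair.union h₁.1 (disjoint_pair_filter_lt hat b)).union_injective
    (hpair.union h₁'.1 (disjoint_pair_filter_lt hat b)) h₂.1 h₂'.1
    (disjoint_pair_union_filter_lt_filter_gt hab.le) heq
  exact ⟨rfl,
    (hpair.union_injective hpair h₁.1 h₁'.1 (disjoint_pair_filter_lt hat b) heq₁).2, rfl⟩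

theorem subset_filter_lt_or_subset_filter_gt (ha : ∀ x ∈ t, a < x) {M : Finset (Finset α)}
    (hM : M ∈ nonCrossingMatchings (insert a t)) {b : α} (hab : {a, b} ∈ M)
    {B : Finset α} (hB : B ∈ M) (hne : B ≠ {a, b}) :
    B ⊆ t.filter (· < b) ∨ B ⊆ t.filter (b < ·) := by
  obtain ⟨u, v, huv, rfl⟩ := exists_lt_and_eq_pair_of_card_eq_two (hM.1.card_eq_two _ hB)
  have hmem : ∀ x ∈ ({u, v} : Finset α), x ∈ t ∧ x ≠ b := by
    intro x hx
    have hxa : x ≠ a := fun h => hne (hM.1.eq_of_mem _ hB _ hab x hx (by simp [h]))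
    have hxb : x ≠ b := fun h => hne (hM.1.eq_of_mem _ hB _ hab x hx (by simp [h]))
    exact ⟨(mem_insert.1 (hM.1.subset _ hB hx)).resolve_left hxa, hxb⟩
  obtain ⟨hut, hub⟩ := hmem u (by simp)
  obtain ⟨hvt, hvb⟩ := hmem v (by simp)
  rcases hvb.lt_or_gt with hvb | hbv
  · exact Or.inl (insert_subset (mem_filter.2 ⟨hut, huv.trans hvb⟩)
      (singleton_subset_iff.2 (mem_filter.2 ⟨hvt, hvb⟩)))
  rcases hub.lt_or_gt with hub | hbu
  · exact (hM.2 ⟨a, u, b, v, ha u hut, hub, hbv, hab, hB⟩).elim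
  · exact Or.inr (insert_subset (mem_filter.2 ⟨hut, hbu⟩)
      (singleton_subset_iff.2 (mem_filter.2 ⟨hvt, hbu.trans huv⟩)))

theorem exists_pair_union_union_eq (ha : ∀ x ∈ t, a < x) {M : Finset (Finset α)}
    (hM : M ∈ nonCrossingMatchings (insert a t)) :
    ∃ b ∈ t, ∃ M₁ ∈ nonCrossingMatchings (t.filter (· < b)),
      ∃ M₂ ∈ nonCrossingMatchings (t.filter (b < ·)), {{a, b}} ∪ M₁ ∪ M₂ = M := by
  obtain ⟨b, hb, hB₀⟩ := hM.1.exists_pair_mem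
  have hsplit : ∀ {B : Finset α}, B ∈ M → B ≠ {a, b} →
      B ⊆ t.filter (· < b) ∨ B ⊆ t.filter (b < ·) :=
    subset_filter_lt_or_subset_filter_gt ha hM hB₀
  have hne : ∀ {B : Finset α} {x : α}, x ∈ B → x ∈ t → x ≠ b → B ≠ {a, b} := by
    rintro B x hxB hxt hxb rfl
    rcases (by simpa using hxB : x = a ∨ x = b) with rfl | rfl
    exacts [(ha x hxt).false, hxb rfl]
  have hL : ∀ B ∈ M, ∀ x ∈ B, x ∈ t.filter (· < b) → B ⊆ t.filter (· < b) := by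
    intro B hB x hxB hx
    obtain ⟨hxt, hxb⟩ := mem_filter.1 hx
    exact (hsplit hB (hne hxB hxt hxb.ne)).resolve_right
      fun h => (mem_filter.1 (h hxB)).2.not_gt hxb
  have hR : ∀ B ∈ M, ∀ x ∈ B, x ∈ t.filter (b < ·) → B ⊆ t.filter (b < ·) := by
    intro B hB x hxB hx
    obtain ⟨hxt, hbx⟩ := mem_filter.1 hx
    exact (hsplit hB (hne hxB hxt hbx.ne')).resolve_left
      fun h => (mem_filter.1 (h hxB)).2.not_gt hbx
  refine ⟨b, hb, M.filter (· ⊆ t.filter (· < b)),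
    ⟨hM.1.restrict ((filter_subset _ _).trans (subset_insert a t)) hL,
      hM.2.mono (filter_subset _ _)⟩,
    M.filter (· ⊆ t.filter (b < ·)),
    ⟨hM.1.restrict ((filter_subset _ _).trans (subset_insert a t)) hR,
      hM.2.mono (filter_subset _ _)⟩, ?_⟩
  ext B
  simp only [mem_union, mem_singleton, mem_filter]
  refine ⟨?_, fun hB => ?_⟩
  · rintro ((rfl | ⟨hB, -⟩) | ⟨hB, -⟩) <;> assumption
  · by_cases h : B = {a, b}
    · exact Or.inl (Or.inl h)
    · rcases hsplit hB h with h | h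
      exacts [Or.inl (Or.inr ⟨hB, h⟩), Or.inr ⟨hB, h⟩]

theorem card_nonCrossingMatchings_insert (ha : ∀ x ∈ t, a < x) :
    Nat.card (nonCrossingMatchings (insert a t)) =
      ∑ b ∈ t, Nat.card (nonCrossingMatchings (t.filter (· < b))) *
        Nat.card (nonCrossingMatchings (t.filter (b < ·))) := by
  let glue (p : Σ b : t, nonCrossingMatchings (t.filter (· < (b : α))) ×
      nonCrossingMatchings (t.filter ((b : α) < ·))) : nonCrossingMatchings (insert a t) :=
    ⟨{{a, (p.1 : α)}} ∪ (p.2.1 : Finset (Finset α)) ∪ p.2.2,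
      pair_union_union_mem_nonCrossingMatchings ha p.1.2 p.2.1.2 p.2.2.2⟩
  have hglue : Function.Bijective glue := by
    refine ⟨fun ⟨⟨b, hb⟩, M₁, M₂⟩ ⟨⟨b', hb'⟩, M₁', M₂'⟩ h => ?_, fun ⟨M, hM⟩ => ?_⟩
    · obtain ⟨rfl, h₁, h₂⟩ := pair_union_union_injective ha hb hb' M₁.2 M₂.2 M₁'.2 M₂'.2
        (congrArg Subtype.val h)
      rw [Subtype.ext h₁, Subtype.ext h₂]
    · obtain ⟨b, hb, M₁, h₁, M₂, h₂, rfl⟩ := exists_pair_union_union_eq ha hM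
      exact ⟨⟨⟨b, hb⟩, ⟨M₁, h₁⟩, ⟨M₂, h₂⟩⟩, rfl⟩
  rw [← Nat.card_congr (Equiv.ofBijective glue hglue), Nat.card_sigma, ← sum_coe_sort t]
  simp only [Nat.card_prod]

end Split

theorem sum_card_filter_lt_card_filter_gt {β : Type*} [AddCommMonoid β] {t : Finset α} {m : ℕ}
    (ht : #t = m + 1) (g : ℕ → ℕ → β) :
    ∑ b ∈ t, g #(t.filter (· < b)) #(t.filter (b < ·)) = ∑ p ∈ antidiagonal m, g p.1 p.2 := by
  have hcard : ∀ b ∈ t, #(t.filter (· < b)) + #(t.filter (b < ·)) = m := by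
    intro b hb
    have herase : t.filter (fun x => x < b ∨ b < x) = t.erase b := by
      simp only [← ne_iff_lt_or_gt, filter_ne']
    rw [← card_union_of_disjoint (disjoint_filter.2 fun _ _ h h' => h.asymm h'), ← filter_or,
      herase, card_erase_of_mem hb, ht, Nat.add_sub_cancel]
  have hmono : StrictMonoOn (fun b => #(t.filter (· < b))) t := by
    intro b hb b' _ hbb'
    refine card_lt_card ((ssubset_iff_of_subset fun x hx => ?_).2
      ⟨b, mem_filter.2 ⟨hb, hbb'⟩, fun h => (mem_filter.1 h).2.false⟩)
    exact mem_filter.2 ⟨(mem_filter.1 hx).1, (mem_filter.1 hx).2.trans hbb'⟩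
  let f (b : α) : ℕ × ℕ := (#(t.filter (· < b)), #(t.filter (b < ·)))
  have hinj : Set.InjOn f t := fun b hb b' hb' h => hmono.injOn hb hb' (congrArg Prod.fst h)
  have himage : t.image f = antidiagonal m := by
    refine eq_of_subset_of_card_le (fun p hp => ?_) ?_
    · obtain ⟨b, hb, rfl⟩ := mem_image.1 hp
      exact HasAntidiagonal.mem_antidiagonal.2 (hcard b hb)
    · rw [card_image_of_injOn hinj, Nat.card_antidiagonal, ht]
  rw [← himage, sum_image hinj]

theorem catalanHalf_card_add_one (t : Finset α) :
    catalanHalf (#t + 1) =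
      ∑ b ∈ t, catalanHalf #(t.filter (· < b)) * catalanHalf #(t.filter (b < ·)) := by
  rcases h : #t with _ | m
  · rw [card_eq_zero.1 h, sum_empty]
    rfl
  · rw [sum_card_filter_lt_card_filter_gt h (fun i j => catalanHalf i * catalanHalf j),
      catalanHalf_add_two]

theorem card_nonCrossingMatchings (s : Finset α) :
    Nat.card (nonCrossingMatchings s) = catalanHalf #s := by
  induction s using Finset.strongInduction with
  | H s ih =>
    rcases s.eq_empty_or_nonempty with rfl | hs
    · simp [nonCrossingMatchings_empty, catalanHalf]
    · have hmin := min'_mem s hs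
      rw [← insert_erase hmin,
        card_nonCrossingMatchings_insert fun _ => min'_lt_of_mem_erase_min' s hs,
        card_insert_of_notMem (notMem_erase _ _), catalanHalf_card_add_one]
      refine sum_congr rfl fun b _ => ?_
      rw [ih _ ((filter_subset _ _).trans_ssubset (erase_ssubset hmin)),
        ih _ ((filter_subset _ _).trans_ssubset (erase_ssubset hmin))]

end LinearOrder

theorem isPerfectMatching_iff_isPerfectMatchingOn_univ {n : ℕ}
    {M : Finset (Finset (Fin (2 * n)))} : IsPerfectMatching n M ↔ IsPerfectMatchingOn univ M := by
  refine ⟨fun ⟨hcard, huniq⟩ => ⟨hcard, fun B _ => subset_univ B, fun x _ => (huniq x).exists,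
    fun B hB B' hB' x hx hx' => (huniq x).unique ⟨hB, hx⟩ ⟨hB', hx'⟩⟩,
    fun h => ⟨h.card_eq_two, fun x => ?_⟩⟩
  obtain ⟨B, hB, hxB⟩ := h.exists_mem x (mem_univ x)
  exact ⟨B, ⟨hB, hxB⟩, fun B' ⟨hB', hxB'⟩ => h.eq_of_mem B' hB' B hB x hxB' hxB⟩

/-- The number of non-crossing perfect matchings of `Fin (2*n)` equals the
`n`-th Catalan number. -/
theorem card_nonCrossing_perfectMatchings (n : ℕ) :
    Nat.card {M : Finset (Finset (Fin (2 * n))) //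
      IsPerfectMatching n M ∧ IsNonCrossing n M} = catalan n := by
  have h := card_nonCrossingMatchings (univ : Finset (Fin (2 * n)))
  rw [card_univ, Fintype.card_fin, catalanHalf_two_mul] at h
  rw [← h]
  exact Nat.card_congr (Equiv.subtypeEquivRight fun M =>
    and_congr_left' isPerfectMatching_iff_isPerfectMatchingOn_univ)
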